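/- arXiv:2407.02704 — 7 statements merged into one kernel-verified Lean document; each statement's English description precedes it below -/
import Mathlib

section
/- For nonempty lists with concatenation flatten μ and put replacing the last element, the put-associativity axiom holds: put(μ(put(x,y)), z) = μ(put(x, put(y,z))) for all x : M M A, y : M A, z : A. -/
inductive NE (α : Type) : Type
  | single : α → NE α
  | cons : α → NE α → NE α

namespace NE

def map {α β : Type} (f : α → β) : NE α → NE β
  | single a => single (f a)
  | cons a t => cons (f a) (map f t)

def last {α : Type} : NE α → α
  | single a => a
  | cons _ t => last t

def head {α : Type} : NE α → α
  | single a => a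
  | cons a _ => a

def append {α : Type} : NE α → NE α → NE α
  | single a, m => cons a m
  | cons a t, m => cons a (append t m)

/-- Flatten (concatenation). -/
def mu {α : Type} : NE (NE α) → NE α
  | single l => l
  | cons l t => append l (mu t)

/-- Singleton. -/
def eta {α : Type} (a : α) : NE α := single a

/-- List of nonempty prefixes. -/
def delta {α : Type} : NE α → NE (NE α)
  | single a => single (single a)
  | cons a t => cons (single a) (map (cons a) (delta t))

/-- List of nonempty suffixes. -/
def suffixes {α : Type} : NE α → NE (NE α)
  | single a => single (single a)
  | cons a t => cons (cons a t) (suffixes t)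

/-- Replace the last element. -/
def putLast {α : Type} : NE α → α → NE α
  | single _, b => single b
  | cons a t, b => cons a (putLast t b)

def length {α : Type} : NE α → Nat
  | single _ => 1
  | cons _ t => length t + 1

theorem putLast_append {α : Type} (l m : NE α) (z : α) :
    putLast (append l m) z = append l (putLast m z) := by
  induction l with
  | single a => rfl
  | cons a t ih => simp only [append, putLast, ih]

end NE

/-- Put-associativity for nonempty lists: `put(μ(put(x,y)), z) = μ(put(x, put(y,z)))`. -/
theorem put_assoc (α : Type) (x : NE (NE α)) (y : NE α) (z : α) :
    NE.putLast (NE.mu (NE.putLast x y)) z = NE.mu (NE.putLast x (NE.putLast y z)) := by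
  induction x with
  | single l => rfl
  | cons l t ih => simp only [NE.putLast, NE.mu, NE.putLast_append, ih]
end

section
/- For nonempty lists with the prefix comonad, the flatten-expand coherence axiom holds: for any nonempty list of nonempty lists x, δ(μ(x)) = μ((Map work)(δ(x))), where work(w) = (Map μ)((Map put)(strength(w, δ(ε(w))))). -/
/-!
Induction on `x`: prefixes of a concatenation are the prefixes of the first block followed by
the first block prepended to the prefixes of the rest (`delta_append`), and on `cons l w` the map
`work` is `work w` with `l` prepended to each entry (`work_cons`), which commutes with `mu`.
-/

namespace NE

variable {α β γ : Type}

theorem map_map (f : β → γ) (g : α → β) :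
    ∀ s : NE α, map f (map g s) = map (fun a => f (g a)) s
  | single _ => rfl
  | cons a t => congrArg (cons (f (g a))) (map_map f g t)

theorem map_id' : ∀ s : NE α, map (fun a => a) s = s
  | single _ => rfl
  | cons a t => congrArg (cons a) (map_id' t)

theorem map_append (f : α → β) :
    ∀ s m : NE α, map f (append s m) = append (map f s) (map f m)
  | single _, _ => rfl
  | cons a t, m => congrArg (cons (f a)) (map_append f t m)

theorem map_mu (f : α → β) :
    ∀ y : NE (NE α), map f (mu y) = mu (map (map f) y)
  | single _ => rfl
  | cons l t => by rw [mu, map_append, map_mu f t]; rfl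

theorem delta_append :
    ∀ l m : NE α, delta (append l m) = append (delta l) (map (append l) (delta m))
  | single _, _ => rfl
  | cons a t, m => by
    simp only [append, delta, delta_append t m, map_append, map_map]

/-- The `work` map of the statement, with strength and `put` fused. -/
def work (w : NE (NE α)) : NE (NE α) :=
  map (fun p => mu (putLast w p)) (delta (last w))

theorem work_single (l : NE α) : work (single l) = delta l :=
  map_id' (delta l)

theorem work_cons (l : NE α) (w : NE (NE α)) :
    work (cons l w) = map (append l) (work w) := by
  simp only [work, last, putLast, mu, map_map]

theorem delta_mu : ∀ x : NE (NE α), delta (mu x) = mu (map work (delta x))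
  | single l => (work_single l).symm
  | cons l t => by
    rw [mu, delta_append, delta_mu t, delta, map, mu, work_single, map_map, map_mu, map_map]
    simp only [work_cons]

end NE

/-- Flatten-expand coherence for nonempty lists with the prefix comonad:
`δ(μ(x)) = μ((Map work)(δ(x)))` where
`work(w) = (Map μ)((Map put)(strength(w, δ(ε(w)))))`. -/
theorem flatten_expand (α : Type) (x : NE (NE α)) :
    NE.delta (NE.mu x) =
      NE.mu (NE.map
        (fun w : NE (NE α) =>
          NE.map NE.mu
            (NE.map (fun q : NE (NE α) × NE α => NE.putLast q.1 q.2)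
              (NE.map (fun p => (w, p)) (NE.delta (NE.last w)))))
        (NE.delta x)) := by
  simp only [NE.map_map]
  exact NE.delta_mu x
end

section
/- A transduction F : Σ⁺ → Γ⁺ is computed by a Mealy machine if and only if it is an L⃗-recognizable transduction, i.e., there exists a finite semigroup S, h : Σ → S, λ : S → Γ with F(a₁…aₙ) = λ(h(a₁)) λ(h(a₁)·h(a₂)) … λ(h(a₁)·…·h(aₙ)). -/
/-- The run of a Mealy machine with transition function `d` from state `q`. -/
def mealyRun {Q Sg Ga : Type} (d : Q × Sg → Q × Ga) : Q → NE Sg → NE Ga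
  | q, NE.single a => NE.single (d (q, a)).2
  | q, NE.cons a t => NE.cons (d (q, a)).2 (mealyRun d (d (q, a)).1 t)

/-- The semigroup-recognizable output, with accumulated product `s` of the prefix read so
far. -/
def sgRun {S Sg Ga : Type} [Mul S] (h : Sg → S) (lam : S → Ga) : S → NE Sg → NE Ga
  | s, NE.single a => NE.single (lam (s * h a))
  | s, NE.cons a t => NE.cons (lam (s * h a)) (sgRun h lam (s * h a) t)

/-- The output of an `L⃗`-recognizable transduction: the `i`-th output letter is
`λ(h(a₁)·…·h(aᵢ))`. -/
def sgOut {S Sg Ga : Type} [Mul S] (h : Sg → S) (lam : S → Ga) : NE Sg → NE Ga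
  | NE.single a => NE.single (lam (h a))
  | NE.cons a t => NE.cons (lam (h a)) (sgRun h lam (h a) t)

/-!
A Mealy machine with states `Q` is simulated by its transition semigroup: maps `Q → Q × Γ`,
where `f * g` runs `f` and then `g` from the state `f` reached, keeping the output of `g`.
The product of the letters of a prefix, applied to `q₀`, yields the machine's last output.
Conversely, a semigroup is simulated by the machine whose state is the product of the prefix
read so far, with one extra initial state for the empty prefix, since `S` need not have a unit.
-/

def MealyTransition (Q Ga : Type) : Type := Q → Q × Ga

namespace MealyTransition

variable {Q Sg Ga : Type}

instance : Semigroup (MealyTransition Q Ga) where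
  mul f g q := g (f q).1
  mul_assoc _ _ _ := rfl

instance [Finite Q] [Finite Ga] : Finite (MealyTransition Q Ga) :=
  inferInstanceAs (Finite (Q → Q × Ga))

def ofLetter (d : Q × Sg → Q × Ga) (a : Sg) : MealyTransition Q Ga := fun q => d (q, a)

def outputFrom (q0 : Q) (f : MealyTransition Q Ga) : Ga := (f q0).2

theorem sgRun_ofLetter (d : Q × Sg → Q × Ga) (q0 : Q) :
    ∀ (f : MealyTransition Q Ga) (w : NE Sg),
      sgRun (ofLetter d) (outputFrom q0) f w = mealyRun d (f q0).1 w
  | _, NE.single _ => rfl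
  | f, NE.cons a t => congrArg _ (sgRun_ofLetter d q0 (f * ofLetter d a) t)

theorem sgOut_ofLetter (d : Q × Sg → Q × Ga) (q0 : Q) :
    ∀ w : NE Sg, sgOut (ofLetter d) (outputFrom q0) w = mealyRun d q0 w
  | NE.single _ => rfl
  | NE.cons a t => congrArg _ (sgRun_ofLetter d q0 (ofLetter d a) t)

end MealyTransition

section PrefixProductMachine

variable {S Sg Ga : Type} [Mul S] (h : Sg → S) (lam : S → Ga)

def prefixProductMachine : Option S × Sg → Option S × Ga
  | (none, a) => (some (h a), lam (h a))
  | (some s, a) => (some (s * h a), lam (s * h a))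

theorem mealyRun_prefixProductMachine_some :
    ∀ (s : S) (w : NE Sg), mealyRun (prefixProductMachine h lam) (some s) w = sgRun h lam s w
  | _, NE.single _ => rfl
  | s, NE.cons a t => congrArg _ (mealyRun_prefixProductMachine_some (s * h a) t)

theorem mealyRun_prefixProductMachine_none :
    ∀ w : NE Sg, mealyRun (prefixProductMachine h lam) none w = sgOut h lam w
  | NE.single _ => rfl
  | NE.cons a t => congrArg _ (mealyRun_prefixProductMachine_some h lam (h a) t)

end PrefixProductMachine

theorem mealy_iff_semigroup_recognizable_general (Sg Ga : Type) [Finite Ga]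
    (F : NE Sg → NE Ga) :
    (∃ (Q : Type) (_ : Finite Q) (q0 : Q) (d : Q × Sg → Q × Ga),
        ∀ w : NE Sg, F w = mealyRun d q0 w) ↔
    (∃ (S : Type) (_ : Finite S) (_ : Semigroup S) (h : Sg → S) (lam : S → Ga),
        ∀ w : NE Sg, F w = sgOut h lam w) := by
  constructor
  · rintro ⟨Q, _, q0, d, hF⟩
    refine ⟨MealyTransition Q Ga, inferInstance, inferInstance, MealyTransition.ofLetter d,
      MealyTransition.outputFrom q0, fun w => ?_⟩
    rw [hF, MealyTransition.sgOut_ofLetter]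
  · rintro ⟨S, _, _, h, lam, hF⟩
    refine ⟨Option S, inferInstance, none, prefixProductMachine h lam, fun w => ?_⟩
    rw [hF, mealyRun_prefixProductMachine_none]

/-- A transduction `F : Σ⁺ → Γ⁺` is computed by a Mealy machine iff it is an
`L⃗`-recognizable transduction, i.e. given by a finite semigroup `S`, `h : Σ → S` and
`λ : S → Γ` via prefix products. -/
theorem mealy_iff_semigroup_recognizable (Sg Ga : Type) [Finite Sg] [Finite Ga]
    (F : NE Sg → NE Ga) :
    (∃ (Q : Type) (_ : Finite Q) (q0 : Q) (d : Q × Sg → Q × Ga),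
        ∀ w : NE Sg, F w = mealyRun d q0 w) ↔
    (∃ (S : Type) (_ : Finite S) (_ : Semigroup S) (h : Sg → S) (lam : S → Ga),
        ∀ w : NE Sg, F w = sgOut h lam w) :=
  mealy_iff_semigroup_recognizable_general Sg Ga F
end

section
/- For every Eilenberg-Moore algebra (A, Π) of the pointed nonempty list monad L̄, there exist monoids M_L and M_R and functions h_L : A → M_L, h_R : A → M_R, and a function g : M_L × A × M_R → A such that Π([a₁,…,a̲ᵢ,…,aₙ]) = g(h_L(a₁)·…·h_L(aᵢ₋₁), aᵢ, h_R(aᵢ₊₁)·…·h_R(aₙ)) for all pointed lists; moreover if A is finite then M_L and M_R can be chosen finite. -/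
/-- A pointed nonempty list: a nonempty list with exactly one distinguished (underlined)
position, represented as the prefix before the point, the pointed element, and the suffix
after it. -/
structure PL (α : Type) : Type where
  pre : List α
  focus : α
  suf : List α

/-- The underlying list of a pointed list. -/
def PL.toList {α : Type} (p : PL α) : List α := p.pre ++ p.focus :: p.suf

/-- Functorial action. -/
def PL.map {α β : Type} (f : α → β) (p : PL α) : PL β :=
  ⟨p.pre.map f, f p.focus, p.suf.map f⟩

/-- Singleton pointed list. -/
def PL.eta {α : Type} (a : α) : PL α := ⟨[], a, []⟩

/-- Flattening of a pointed list of pointed lists, keeping the doubly-underlined element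
underlined. -/
def PL.mu {α : Type} (p : PL (PL α)) : PL α :=
  ⟨(p.pre.map PL.toList).flatten ++ p.focus.pre, p.focus.focus,
    p.focus.suf ++ (p.suf.map PL.toList).flatten⟩

/-! Associativity lets a pointed list be evaluated from the inside out:
`Π [l, Π q, r] = Π [l ++ q.pre, q.focus, q.suf ++ r]`. Hence the suffix acts on the pointed
element through right translations `x ↦ Π [x̲, a]`, and the prefix then acts on the result
through left translations `x ↦ Π [a, x̲]`. Both are endofunctions of `A`, so the monoids can be
taken to be `Function.End A` and its opposite, which are finite when `A` is. -/

namespace PL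

variable {A : Type}

structure IsAlgebra (P : PL A → A) : Prop where
  unit : ∀ a : A, P (eta a) = a
  assoc : ∀ l : PL (PL A), P (map P l) = P (mu l)

def leftTranslation (P : PL A → A) (a : A) : Function.End A := fun x => P ⟨[a], x, []⟩

/-- Right translations compose in reverse order, hence the opposite monoid. -/
def rightTranslation (P : PL A → A) (a : A) : (Function.End A)ᵐᵒᵖ :=
  MulOpposite.op fun x => P ⟨[], x, [a]⟩

namespace IsAlgebra

variable {P : PL A → A} (hP : IsAlgebra P)
include hP

theorem apply_mk_nil_nil (x : A) : P ⟨[], x, []⟩ = x := hP.unit x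

theorem apply_mk_apply (l r : List A) (q : PL A) :
    P ⟨l, P q, r⟩ = P ⟨l ++ q.pre, q.focus, q.suf ++ r⟩ := by
  have h := hP.assoc ⟨l.map eta, q, r.map eta⟩
  simpa [map, mu, toList, eta, Function.comp_def, hP.apply_mk_nil_nil, ← List.flatMap_def] using h

theorem prod_leftTranslation_apply (l : List A) (x : A) :
    (l.map (leftTranslation P)).prod x = P ⟨l, x, []⟩ := by
  induction l with
  | nil => exact (hP.apply_mk_nil_nil x).symm
  | cons a l ih =>
    change P ⟨[a], (l.map (leftTranslation P)).prod x, []⟩ = _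
    rw [ih, hP.apply_mk_apply]
    rfl

theorem unop_prod_rightTranslation_apply (r : List A) (x : A) :
    (r.map (rightTranslation P)).prod.unop x = P ⟨[], x, r⟩ := by
  induction r generalizing x with
  | nil => exact (hP.apply_mk_nil_nil x).symm
  | cons a r ih =>
    change (r.map (rightTranslation P)).prod.unop (P ⟨[], x, [a]⟩) = _
    rw [ih, hP.apply_mk_apply]
    rfl

theorem eq_prod_translations_apply (p : PL A) :
    P p = (p.pre.map (leftTranslation P)).prod
      ((p.suf.map (rightTranslation P)).prod.unop p.focus) := by
  rw [hP.prod_leftTranslation_apply, hP.unop_prod_rightTranslation_apply, hP.apply_mk_apply]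
  simp

end IsAlgebra

end PL

/-- For every Eilenberg–Moore algebra `(A, P)` of the pointed nonempty-list monad, there
are monoids `M_L`, `M_R`, functions `h_L`, `h_R` and `g` such that the product of any
pointed list is determined by the `M_L`-product of the prefix, the pointed element, and
the `M_R`-product of the suffix; moreover if `A` is finite then `M_L` and `M_R` can be
chosen finite. -/
theorem pointed_algebra_product_via_two_monoids (A : Type) (P : PL A → A)
    (unitAx : ∀ a : A, P (PL.eta a) = a)
    (assocAx : ∀ l : PL (PL A), P (PL.map P l) = P (PL.mu l)) :
    (∃ (ML MR : Type) (_ : Monoid ML) (_ : Monoid MR)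
        (hL : A → ML) (hR : A → MR) (g : ML → A → MR → A),
        ∀ p : PL A, P p = g (p.pre.map hL).prod p.focus (p.suf.map hR).prod) ∧
    (Finite A →
      ∃ (ML MR : Type) (_ : Finite ML) (_ : Finite MR) (_ : Monoid ML) (_ : Monoid MR)
          (hL : A → ML) (hR : A → MR) (g : ML → A → MR → A),
          ∀ p : PL A, P p = g (p.pre.map hL).prod p.focus (p.suf.map hR).prod) := by
  have hP : PL.IsAlgebra P := ⟨unitAx, assocAx⟩
  refine ⟨⟨_, _, inferInstance, inferInstance, PL.leftTranslation P, PL.rightTranslation P,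
    fun f a f' => f (f'.unop a), hP.eq_prod_translations_apply⟩, fun _ => ?_⟩
  have : Finite (Function.End A) := inferInstanceAs (Finite (A → A))
  exact ⟨_, _, this, Finite.of_equiv _ MulOpposite.opEquiv, inferInstance, inferInstance,
    PL.leftTranslation P, PL.rightTranslation P, fun f a f' => f (f'.unop a),
    hP.eq_prod_translations_apply⟩
end

section
/- Define concat : M A × M A → M A by concat(k, l) = μ(put((Map η)(k), l)). Assuming put-associativity (put(μ(put(x,y)), z) = μ(put(x, put(y,z)))) and naturality of put and the algebra laws, contexts compose: ctx_k ∘ ctx_l = ctx_{concat(k,l)} for all k, l ∈ M A. Consequently the set of contexts C_A = {ctx_l | l ∈ M A} is closed under composition. -/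
/-!
Unfolding `concat`, put-associativity moves the inner context inside the multiplication:
`put (concat k l, x) = μ (put (Map η k, put (l, x)))`. The associativity law of the algebra
turns `Π ∘ μ` into `Π ∘ Map Π`, naturality of `put` pushes `Map Π` through `put`, and the unit
law `Π ∘ η = id` collapses `Map Π (Map η k)` back to `k`.
-/

section Contexts

variable {M : Type → Type} (map : {A B : Type} → (A → B) → M A → M B)
  (eta : {A : Type} → A → M A) (mu : {A : Type} → M (M A) → M A)
  (put : {A : Type} → M A × A → M A)

theorem map_map_of_leftInverse
    (mapId : ∀ (A : Type) (x : M A), map (id : A → A) x = x)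
    (mapComp : ∀ (A B C : Type) (f : B → C) (g : A → B) (x : M A),
      map f (map g x) = map (f ∘ g) x)
    {A B : Type} {f : B → A} {g : A → B} (h : Function.LeftInverse f g) (x : M A) :
    map f (map g x) = x := by
  rw [mapComp, h.comp_eq_id, mapId]

theorem ctx_concat_apply
    (mapId : ∀ (A : Type) (x : M A), map (id : A → A) x = x)
    (mapComp : ∀ (A B C : Type) (f : B → C) (g : A → B) (x : M A),
      map f (map g x) = map (f ∘ g) x)
    (putNat : ∀ (A B : Type) (f : A → B) (l : M A) (a : A),
      map f (put (l, a)) = put (map f l, f a))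
    (putAssoc : ∀ (A : Type) (x : M (M A)) (y : M A) (z : A),
      put (mu (put (x, y)), z) = mu (put (x, put (y, z))))
    {A : Type} (P : M A → A) (algUnit : ∀ a : A, P (eta a) = a)
    (algAssoc : ∀ l : M (M A), P (map P l) = P (mu l)) (k l : M A) (x : A) :
    P (put (mu (put (map eta k, l)), x)) = P (put (k, P (put (l, x)))) :=
  calc P (put (mu (put (map eta k, l)), x))
      _ = P (mu (put (map eta k, put (l, x)))) := by rw [putAssoc]
      _ = P (put (map P (map eta k), P (put (l, x)))) := by rw [← algAssoc, putNat]
      _ = P (put (k, P (put (l, x)))) := by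
        rw [map_map_of_leftInverse map mapId mapComp algUnit]

end Contexts

theorem contexts_compose_general (M : Type → Type)
    (map : {A B : Type} → (A → B) → M A → M B)
    (eta : {A : Type} → A → M A)
    (mu : {A : Type} → M (M A) → M A)
    (put : {A : Type} → M A × A → M A)
    (mapId : ∀ (A : Type) (x : M A), map (id : A → A) x = x)
    (mapComp : ∀ (A B C : Type) (f : B → C) (g : A → B) (x : M A),
      map f (map g x) = map (f ∘ g) x)
    (putNat : ∀ (A B : Type) (f : A → B) (l : M A) (a : A),
      map f (put (l, a)) = put (map f l, f a))
    (putAssoc : ∀ (A : Type) (x : M (M A)) (y : M A) (z : A),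
      put (mu (put (x, y)), z) = mu (put (x, put (y, z))))
    (A : Type) (P : M A → A)
    (algUnit : ∀ a : A, P (eta a) = a)
    (algAssoc : ∀ l : M (M A), P (map P l) = P (mu l)) :
    (∀ k l : M A,
      (fun x => P (put (k, x))) ∘ (fun x => P (put (l, x))) =
        fun x => P (put (mu (put (map eta k, l)), x))) ∧
    (∀ f g : A → A,
      (∃ k : M A, f = fun x => P (put (k, x))) →
      (∃ l : M A, g = fun x => P (put (l, x))) →
      ∃ m : M A, f ∘ g = fun x => P (put (m, x))) := by
  have ctx_comp_ctx : ∀ k l : M A,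
      (fun x => P (put (k, x))) ∘ (fun x => P (put (l, x))) =
        fun x => P (put (mu (put (map eta k, l)), x)) := fun k l =>
    funext fun x =>
      (ctx_concat_apply map eta mu put mapId mapComp putNat putAssoc P algUnit algAssoc k l x).symm
  refine ⟨ctx_comp_ctx, ?_⟩
  rintro f g ⟨k, rfl⟩ ⟨l, rfl⟩
  exact ⟨mu (put (map eta k, l)), ctx_comp_ctx k l⟩

/-- Define `concat(k,l) = μ(put((Map η)(k), l))`.  Assuming the functor, monad and
naturality axioms, naturality of `put`, and put-associativity, contexts compose:
`ctx_k ∘ ctx_l = ctx_{concat(k,l)}`.  Consequently the set of contexts is closed under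
composition. -/
theorem contexts_compose (M : Type → Type)
    (map : {A B : Type} → (A → B) → M A → M B)
    (eta : {A : Type} → A → M A)
    (mu : {A : Type} → M (M A) → M A)
    (put : {A : Type} → M A × A → M A)
    (mapId : ∀ (A : Type) (x : M A), map (id : A → A) x = x)
    (mapComp : ∀ (A B C : Type) (f : B → C) (g : A → B) (x : M A),
      map f (map g x) = map (f ∘ g) x)
    (muNat : ∀ (A B : Type) (f : A → B) (x : M (M A)),
      mu (map (map f) x) = map f (mu x))
    (etaNat : ∀ (A B : Type) (f : A → B) (x : A), eta (f x) = map f (eta x))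
    (putNat : ∀ (A B : Type) (f : A → B) (l : M A) (a : A),
      map f (put (l, a)) = put (map f l, f a))
    (muAssoc : ∀ (A : Type) (x : M (M (M A))), mu (mu x) = mu (map mu x))
    (muEta : ∀ (A : Type) (x : M A), mu (eta x) = x)
    (muMapEta : ∀ (A : Type) (x : M A), mu (map eta x) = x)
    (putAssoc : ∀ (A : Type) (x : M (M A)) (y : M A) (z : A),
      put (mu (put (x, y)), z) = mu (put (x, put (y, z))))
    (A : Type) (P : M A → A)
    (algUnit : ∀ a : A, P (eta a) = a)
    (algAssoc : ∀ l : M (M A), P (map P l) = P (mu l)) :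
    (∀ k l : M A,
      (fun x => P (put (k, x))) ∘ (fun x => P (put (l, x))) =
        fun x => P (put (mu (put (map eta k, l)), x))) ∧
    (∀ f g : A → A,
      (∃ k : M A, f = fun x => P (put (k, x))) →
      (∃ l : M A, g = fun x => P (put (l, x))) →
      ∃ m : M A, f ∘ g = fun x => P (put (m, x))) :=
  contexts_compose_general M map eta mu put mapId mapComp putNat putAssoc A P algUnit algAssoc
end

section
/- Let M be a monad and comonad with a put operation satisfying flatten-extract, singleton-expand, singleton-extract, get-put, put-get, put-put, put-associativity, singleton-put, and flatten-expand. Given M-algebras (S₁,Π₁), (S₂,Π₂), the generalized wreath product S₃ = S₁ × ((S₁ → S₁) → S₂) with the product Π₃ defined via contexts is a valid M-algebra: Π₃ ∘ η = id and Π₃ ∘ (M Π₃) = Π₃ ∘ μ. -/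
/-! The first component of `Π₃` is `Π₁` pushed along `π₁`, so it inherits the algebra laws of `S₁`.
For the second component, the key point is how contexts behave under flattening: by
put-associativity, the context of a position `p` inside the block `w` of a flattened list is
`ctx₁(Π₁ of the blocks of w) ∘ ctx₁(p within its block)`. Flatten-expand enumerates the positions
of `μ l` block by block, so both `Π₃ ∘ M Π₃` and `Π₃ ∘ μ` reduce to `Π₂` of the same flattened
list of local values, and the associativity of `Π₂` closes the argument. -/

section WreathProduct

variable {M : Type → Type} (map : {A B : Type} → (A → B) → M A → M B)
  (eta : {A : Type} → A → M A) (mu : {A : Type} → M (M A) → M A)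
  (eps : {A : Type} → M A → A) (delta : {A : Type} → M A → M (M A))
  (put : {A : Type} → M A × A → M A)

section Context

variable {S : Type} (P : M S → S)

def ctx (l : M S) (x : S) : S := P (put (l, x))

theorem ctx_eta (singletonPut : ∀ (A : Type) (x y : A), put (eta x, y) = eta y)
    (algUnit : ∀ x : S, P (eta x) = x) (a : S) : ctx put P (eta a) = id := by
  funext y
  exact (congrArg P (singletonPut S a y)).trans (algUnit y)

theorem ctx_mu_put (putNat : ∀ (A B : Type) (f : A → B) (l : M A) (a : A),
      map f (put (l, a)) = put (map f l, f a))
    (putAssoc : ∀ (A : Type) (x : M (M A)) (y : M A) (z : A),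
      put (mu (put (x, y)), z) = mu (put (x, put (y, z))))
    (algAssoc : ∀ l : M (M S), P (map P l) = P (mu l)) (w : M (M S)) (p : M S) :
    ctx put P (mu (put (w, p))) = ctx put P (map P w) ∘ ctx put P p := by
  funext y
  simp only [ctx, Function.comp_apply]
  rw [putAssoc, ← algAssoc, putNat]

end Context

theorem map_mu_put (muNat : ∀ (A B : Type) (f : A → B) (x : M (M A)),
      mu (map (map f) x) = map f (mu x))
    (putNat : ∀ (A B : Type) (f : A → B) (l : M A) (a : A),
      map f (put (l, a)) = put (map f l, f a))
    {A B : Type} (f : A → B) (w : M (M A)) (p : M A) :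
    map f (mu (put (w, p))) = mu (put (map (map f) w, map f p)) := by
  rw [← muNat, putNat]

theorem eps_mu_put (flattenExtract : ∀ (A : Type) (x : M (M A)), eps (mu x) = eps (eps x))
    (putGet : ∀ (A : Type) (l : M A) (a : A), eps (put (l, a)) = a)
    {A : Type} (w : M (M A)) (p : M A) : eps (mu (put (w, p))) = eps p := by
  rw [flattenExtract, putGet]

variable {S1 S2 : Type} (P1 : M S1 → S1) (P2 : M S2 → S2)

/-- The value that the focused position of `m` contributes to the second component when the
surrounding context is `c`; this is `app ∘ ⟨tmp1, tmp2 c⟩` of the paper. -/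
def wreathLocal (c : S1 → S1) (m : M (S1 × ((S1 → S1) → S2))) : S2 :=
  (eps m).2 (c ∘ ctx put P1 (map Prod.fst m))

def wreathProd (l : M (S1 × ((S1 → S1) → S2))) : S1 × ((S1 → S1) → S2) :=
  (P1 (map Prod.fst l), fun c => P2 (map (wreathLocal map eps put P1 c) (delta l)))

theorem wreathProd_eta
    (etaNat : ∀ (A B : Type) (f : A → B) (x : A), eta (f x) = map f (eta x))
    (singletonExpand : ∀ (A : Type) (x : A), delta (eta x) = map eta (eta x))
    (singletonExtract : ∀ (A : Type) (x : A), eps (eta x) = x)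
    (singletonPut : ∀ (A : Type) (x y : A), put (eta x, y) = eta y)
    (alg1Unit : ∀ x : S1, P1 (eta x) = x) (alg2Unit : ∀ x : S2, P2 (eta x) = x)
    (x : S1 × ((S1 → S1) → S2)) :
    wreathProd map eps delta put P1 P2 (eta x) = x := by
  refine Prod.ext ?_ (funext fun c => ?_)
  · simp only [wreathProd, ← etaNat, alg1Unit]
  · simp only [wreathProd, singletonExpand, ← etaNat, alg2Unit, wreathLocal, singletonExtract,
      ctx_eta eta put P1 singletonPut alg1Unit, Function.comp_id]

theorem wreathLocal_map_wreathProd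
    (mapComp : ∀ (A B C : Type) (f : B → C) (g : A → B) (x : M A),
      map f (map g x) = map (f ∘ g) x)
    (epsNat : ∀ (A B : Type) (f : A → B) (x : M A), f (eps x) = eps (map f x))
    (c : S1 → S1) (w : M (M (S1 × ((S1 → S1) → S2)))) :
    wreathLocal map eps put P1 c (map (wreathProd map eps delta put P1 P2) w) =
      P2 (map (wreathLocal map eps put P1 (c ∘ ctx put P1 (map P1 (map (map Prod.fst) w))))
        (delta (eps w))) := by
  rw [wreathLocal, ← epsNat, mapComp, mapComp]
  rfl

theorem wreathLocal_mu_put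
    (muNat : ∀ (A B : Type) (f : A → B) (x : M (M A)), mu (map (map f) x) = map f (mu x))
    (putNat : ∀ (A B : Type) (f : A → B) (l : M A) (a : A),
      map f (put (l, a)) = put (map f l, f a))
    (flattenExtract : ∀ (A : Type) (x : M (M A)), eps (mu x) = eps (eps x))
    (putGet : ∀ (A : Type) (l : M A) (a : A), eps (put (l, a)) = a)
    (putAssoc : ∀ (A : Type) (x : M (M A)) (y : M A) (z : A),
      put (mu (put (x, y)), z) = mu (put (x, put (y, z))))
    (alg1Assoc : ∀ l : M (M S1), P1 (map P1 l) = P1 (mu l))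
    (c : S1 → S1) (w : M (M (S1 × ((S1 → S1) → S2)))) (p : M (S1 × ((S1 → S1) → S2))) :
    wreathLocal map eps put P1 c (mu (put (w, p))) =
      wreathLocal map eps put P1 (c ∘ ctx put P1 (map P1 (map (map Prod.fst) w))) p := by
  rw [wreathLocal, wreathLocal, eps_mu_put mu eps put flattenExtract putGet,
    map_mu_put map mu put muNat putNat, ctx_mu_put map mu put P1 putNat putAssoc alg1Assoc]
  rfl

theorem wreathProd_assoc
    (mapComp : ∀ (A B C : Type) (f : B → C) (g : A → B) (x : M A),
      map f (map g x) = map (f ∘ g) x)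
    (muNat : ∀ (A B : Type) (f : A → B) (x : M (M A)), mu (map (map f) x) = map f (mu x))
    (epsNat : ∀ (A B : Type) (f : A → B) (x : M A), f (eps x) = eps (map f x))
    (deltaNat : ∀ (A B : Type) (f : A → B) (x : M A),
      delta (map f x) = map (map f) (delta x))
    (putNat : ∀ (A B : Type) (f : A → B) (l : M A) (a : A),
      map f (put (l, a)) = put (map f l, f a))
    (flattenExtract : ∀ (A : Type) (x : M (M A)), eps (mu x) = eps (eps x))
    (putGet : ∀ (A : Type) (l : M A) (a : A), eps (put (l, a)) = a)
    (putAssoc : ∀ (A : Type) (x : M (M A)) (y : M A) (z : A),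
      put (mu (put (x, y)), z) = mu (put (x, put (y, z))))
    (flattenExpand : ∀ (A : Type) (x : M (M A)),
      delta (mu x) =
        mu (map (fun w : M (M A) =>
          map mu (map put (map (fun p : M A => (w, p)) (delta (eps w)))))
          (delta x)))
    (alg1Assoc : ∀ l : M (M S1), P1 (map P1 l) = P1 (mu l))
    (alg2Assoc : ∀ l : M (M S2), P2 (map P2 l) = P2 (mu l))
    (l : M (M (S1 × ((S1 → S1) → S2)))) :
    wreathProd map eps delta put P1 P2 (map (wreathProd map eps delta put P1 P2) l) =
      wreathProd map eps delta put P1 P2 (mu l) := by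
  set P3 := wreathProd map eps delta put P1 P2
  set localVal := wreathLocal map eps put P1
  let blockValues (c : S1 → S1) (w : M (M (S1 × ((S1 → S1) → S2)))) : M S2 :=
    map (localVal (c ∘ ctx put P1 (map P1 (map (map Prod.fst) w)))) (delta (eps w))
  refine Prod.ext ?_ (funext fun c => ?_)
  · change P1 (map Prod.fst (map P3 l)) = P1 (map Prod.fst (mu l))
    rw [mapComp, ← muNat, ← alg1Assoc, mapComp]
    rfl
  · have lhs :
        P2 (map (localVal c) (delta (map P3 l))) = P2 (mu (map (blockValues c) (delta l))) := by
      rw [deltaNat, mapComp, ← alg2Assoc, mapComp]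
      congr 2
      funext w
      exact wreathLocal_map_wreathProd map eps delta put P1 P2 mapComp epsNat c w
    have rhs :
        P2 (map (localVal c) (delta (mu l))) = P2 (mu (map (blockValues c) (delta l))) := by
      rw [flattenExpand, ← muNat, mapComp]
      congr 3
      funext w
      simp only [Function.comp_apply, mapComp]
      congr 1
      funext p
      exact wreathLocal_mu_put map mu eps put P1 muNat putNat flattenExtract putGet putAssoc
        alg1Assoc c w p
    exact lhs.trans rhs.symm

end WreathProduct

theorem wreath_product_is_algebra_general
    (M : Type → Type)
    (map : {A B : Type} → (A → B) → M A → M B)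
    (eta : {A : Type} → A → M A)
    (mu : {A : Type} → M (M A) → M A)
    (eps : {A : Type} → M A → A)
    (delta : {A : Type} → M A → M (M A))
    (put : {A : Type} → M A × A → M A)
    -- functor axioms
    (mapComp : ∀ (A B C : Type) (f : B → C) (g : A → B) (x : M A),
      map f (map g x) = map (f ∘ g) x)
    -- naturality
    (muNat : ∀ (A B : Type) (f : A → B) (x : M (M A)), mu (map (map f) x) = map f (mu x))
    (etaNat : ∀ (A B : Type) (f : A → B) (x : A), eta (f x) = map f (eta x))
    (epsNat : ∀ (A B : Type) (f : A → B) (x : M A), f (eps x) = eps (map f x))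
    (deltaNat : ∀ (A B : Type) (f : A → B) (x : M A),
      delta (map f x) = map (map f) (delta x))
    (putNat : ∀ (A B : Type) (f : A → B) (l : M A) (a : A),
      map f (put (l, a)) = put (map f l, f a))
    -- coherence axioms
    (flattenExtract : ∀ (A : Type) (x : M (M A)), eps (mu x) = eps (eps x))
    (singletonExpand : ∀ (A : Type) (x : A), delta (eta x) = map eta (eta x))
    (singletonExtract : ∀ (A : Type) (x : A), eps (eta x) = x)
    (putGet : ∀ (A : Type) (l : M A) (a : A), eps (put (l, a)) = a)
    (putAssoc : ∀ (A : Type) (x : M (M A)) (y : M A) (z : A),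
      put (mu (put (x, y)), z) = mu (put (x, put (y, z))))
    (singletonPut : ∀ (A : Type) (x y : A), put (eta x, y) = eta y)
    (flattenExpand : ∀ (A : Type) (x : M (M A)),
      delta (mu x) =
        mu (map (fun w : M (M A) =>
          map mu (map put (map (fun p : M A => (w, p)) (delta (eps w)))))
          (delta x)))
    (S1 S2 : Type) (P1 : M S1 → S1) (P2 : M S2 → S2)
    (alg1Unit : ∀ x : S1, P1 (eta x) = x)
    (alg1Assoc : ∀ l : M (M S1), P1 (map P1 l) = P1 (mu l))
    (alg2Unit : ∀ x : S2, P2 (eta x) = x)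
    (alg2Assoc : ∀ l : M (M S2), P2 (map P2 l) = P2 (mu l)) :
    let ctx1 : M S1 → S1 → S1 := fun l x => P1 (put (l, x))
    let P3 : M (S1 × ((S1 → S1) → S2)) → S1 × ((S1 → S1) → S2) := fun l =>
      (P1 (map Prod.fst l),
       fun c => P2 (map
         (fun m : M (S1 × ((S1 → S1) → S2)) =>
           (eps m).2 (c ∘ ctx1 (map Prod.fst m)))
         (delta l)))
    (∀ x : S1 × ((S1 → S1) → S2), P3 (eta x) = x) ∧
    (∀ l : M (M (S1 × ((S1 → S1) → S2))), P3 (map P3 l) = P3 (mu l)) :=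
  ⟨wreathProd_eta map eta eps delta put P1 P2 etaNat singletonExpand singletonExtract
      singletonPut alg1Unit alg2Unit,
    wreathProd_assoc map mu eps delta put P1 P2 mapComp muNat epsNat deltaNat putNat
      flattenExtract putGet putAssoc flattenExpand alg1Assoc alg2Assoc⟩

/-- Generalized wreath product: given `M`-algebras `(S₁, Π₁)` and `(S₂, Π₂)`, the set
`S₃ = S₁ × ((S₁ → S₁) → S₂)` with the product `Π₃` defined via contexts is a valid
`M`-algebra, assuming the coherence axioms between the monad, comonad and `put`
structures of `M`. -/
theorem wreath_product_is_algebra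
    (M : Type → Type)
    (map : {A B : Type} → (A → B) → M A → M B)
    (eta : {A : Type} → A → M A)
    (mu : {A : Type} → M (M A) → M A)
    (eps : {A : Type} → M A → A)
    (delta : {A : Type} → M A → M (M A))
    (put : {A : Type} → M A × A → M A)
    -- functor axioms
    (mapId : ∀ (A : Type) (x : M A), map (id : A → A) x = x)
    (mapComp : ∀ (A B C : Type) (f : B → C) (g : A → B) (x : M A),
      map f (map g x) = map (f ∘ g) x)
    -- naturality
    (muNat : ∀ (A B : Type) (f : A → B) (x : M (M A)), mu (map (map f) x) = map f (mu x))
    (etaNat : ∀ (A B : Type) (f : A → B) (x : A), eta (f x) = map f (eta x))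
    (epsNat : ∀ (A B : Type) (f : A → B) (x : M A), f (eps x) = eps (map f x))
    (deltaNat : ∀ (A B : Type) (f : A → B) (x : M A),
      delta (map f x) = map (map f) (delta x))
    (putNat : ∀ (A B : Type) (f : A → B) (l : M A) (a : A),
      map f (put (l, a)) = put (map f l, f a))
    -- monad axioms
    (muAssoc : ∀ (A : Type) (x : M (M (M A))), mu (mu x) = mu (map mu x))
    (muEta : ∀ (A : Type) (x : M A), mu (eta x) = x)
    (muMapEta : ∀ (A : Type) (x : M A), mu (map eta x) = x)
    -- comonad axioms
    (deltaAssoc : ∀ (A : Type) (x : M A), delta (delta x) = map delta (delta x))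
    (epsDelta : ∀ (A : Type) (x : M A), eps (delta x) = x)
    (mapEpsDelta : ∀ (A : Type) (x : M A), map eps (delta x) = x)
    -- coherence axioms
    (flattenExtract : ∀ (A : Type) (x : M (M A)), eps (mu x) = eps (eps x))
    (singletonExpand : ∀ (A : Type) (x : A), delta (eta x) = map eta (eta x))
    (singletonExtract : ∀ (A : Type) (x : A), eps (eta x) = x)
    (getPut : ∀ (A : Type) (l : M A), put (l, eps l) = l)
    (putGet : ∀ (A : Type) (l : M A) (a : A), eps (put (l, a)) = a)
    (putPut : ∀ (A : Type) (l : M A) (a b : A), put (put (l, a), b) = put (l, b))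
    (putAssoc : ∀ (A : Type) (x : M (M A)) (y : M A) (z : A),
      put (mu (put (x, y)), z) = mu (put (x, put (y, z))))
    (singletonPut : ∀ (A : Type) (x y : A), put (eta x, y) = eta y)
    (flattenExpand : ∀ (A : Type) (x : M (M A)),
      delta (mu x) =
        mu (map (fun w : M (M A) =>
          map mu (map put (map (fun p : M A => (w, p)) (delta (eps w)))))
          (delta x)))
    (S1 S2 : Type) (P1 : M S1 → S1) (P2 : M S2 → S2)
    (alg1Unit : ∀ x : S1, P1 (eta x) = x)
    (alg1Assoc : ∀ l : M (M S1), P1 (map P1 l) = P1 (mu l))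
    (alg2Unit : ∀ x : S2, P2 (eta x) = x)
    (alg2Assoc : ∀ l : M (M S2), P2 (map P2 l) = P2 (mu l)) :
    let ctx1 : M S1 → S1 → S1 := fun l x => P1 (put (l, x))
    let P3 : M (S1 × ((S1 → S1) → S2)) → S1 × ((S1 → S1) → S2) := fun l =>
      (P1 (map Prod.fst l),
       fun c => P2 (map
         (fun m : M (S1 × ((S1 → S1) → S2)) =>
           (eps m).2 (c ∘ ctx1 (map Prod.fst m)))
         (delta l)))
    (∀ x : S1 × ((S1 → S1) → S2), P3 (eta x) = x) ∧
    (∀ l : M (M (S1 × ((S1 → S1) → S2))), P3 (map P3 l) = P3 (mu l)) :=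
  wreath_product_is_algebra_general M map eta mu eps delta put mapComp muNat etaNat epsNat deltaNat
    putNat flattenExtract singletonExpand singletonExtract putGet putAssoc singletonPut
    flattenExpand S1 S2 P1 P2 alg1Unit alg1Assoc alg2Unit alg2Assoc
end

section
/- Under the same coherence axioms, the M-transduction defined by the generalized wreath product (S₃, h₃, λ₃) computes the composition of the M-transductions (S₁,h₁,λ₁) : M Σ → M Γ and (S₂,h₂,λ₂) : M Γ → M Δ; i.e., (M λ₃)∘(M Π₃)∘δ∘(M h₃) = (M λ₂)∘(M Π₂)∘δ∘(M h₂)∘(M λ₁)∘(M Π₁)∘δ∘(M h₁). -/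
/-!
Both sides are coextensions `map f ∘ delta` of local functions `M X → Z`, thanks to naturality of
`delta` and, for the composite, coassociativity of `delta`. The two local functions then agree
because the wreath product, fed its own current letter `h₁ (eps n)` as the hole of the context
`ctx₁ (map h₁ n)`, recovers `P₁ (map h₁ n)` by get-put.
-/

section Coextension

variable {M : Type → Type} {map : {A B : Type} → (A → B) → M A → M B}
  {delta : {A : Type} → M A → M (M A)}

theorem map_delta_map
    (mapComp : ∀ (A B C : Type) (f : B → C) (g : A → B) (x : M A),
      map f (map g x) = map (f ∘ g) x)
    (deltaNat : ∀ (A B : Type) (f : A → B) (x : M A),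
      delta (map f x) = map (map f) (delta x))
    {A B C : Type} (h : A → B) (f : M B → C) (x : M A) :
    map f (delta (map h x)) = map (fun m => f (map h m)) (delta x) := by
  rw [deltaNat, mapComp]
  rfl

theorem map_delta_map_delta
    (mapComp : ∀ (A B C : Type) (f : B → C) (g : A → B) (x : M A),
      map f (map g x) = map (f ∘ g) x)
    (deltaNat : ∀ (A B : Type) (f : A → B) (x : M A),
      delta (map f x) = map (map f) (delta x))
    (deltaAssoc : ∀ (A : Type) (x : M A), delta (delta x) = map delta (delta x))
    {A B C : Type} (f : M A → B) (g : M B → C) (x : M A) :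
    map g (delta (map f (delta x))) = map (fun m => g (map f (delta m))) (delta x) := by
  rw [map_delta_map mapComp deltaNat, deltaAssoc, mapComp]
  rfl

end Coextension

theorem put_map_eps {M : Type → Type} {map : {A B : Type} → (A → B) → M A → M B}
    {eps : {A : Type} → M A → A} {put : {A : Type} → M A × A → M A}
    (epsNat : ∀ (A B : Type) (f : A → B) (x : M A), f (eps x) = eps (map f x))
    (getPut : ∀ (A : Type) (l : M A), put (l, eps l) = l)
    {A B : Type} (h : A → B) (n : M A) :
    put (map h n, h (eps n)) = map h n := by
  rw [epsNat _ _ h, getPut]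

theorem wreath_product_composes_general
    (M : Type → Type)
    (map : {A B : Type} → (A → B) → M A → M B)
    (eps : {A : Type} → M A → A)
    (delta : {A : Type} → M A → M (M A))
    (put : {A : Type} → M A × A → M A)
    -- functor axioms
    (mapComp : ∀ (A B C : Type) (f : B → C) (g : A → B) (x : M A),
      map f (map g x) = map (f ∘ g) x)
    -- naturality
    (epsNat : ∀ (A B : Type) (f : A → B) (x : M A), f (eps x) = eps (map f x))
    (deltaNat : ∀ (A B : Type) (f : A → B) (x : M A),
      delta (map f x) = map (map f) (delta x))
    -- comonad axioms
    (deltaAssoc : ∀ (A : Type) (x : M A), delta (delta x) = map delta (delta x))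
    -- coherence axioms
    (getPut : ∀ (A : Type) (l : M A), put (l, eps l) = l)
    (S1 S2 : Type) (P1 : M S1 → S1) (P2 : M S2 → S2)
    (X Y Z : Type)
    (h1 : X → S1) (lam1 : S1 → Y) (h2 : Y → S2) (lam2 : S2 → Z) :
    let ctx1 : M S1 → S1 → S1 := fun l x => P1 (put (l, x))
    let P3 : M (S1 × ((S1 → S1) → S2)) → S1 × ((S1 → S1) → S2) := fun l =>
      (P1 (map Prod.fst l),
       fun c => P2 (map
         (fun m : M (S1 × ((S1 → S1) → S2)) =>
           (eps m).2 (c ∘ ctx1 (map Prod.fst m)))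
         (delta l)))
    let h3 : X → S1 × ((S1 → S1) → S2) := fun a =>
      (h1 a, fun c => h2 (lam1 (c (h1 a))))
    let lam3 : S1 × ((S1 → S1) → S2) → Z := fun s => lam2 (s.2 id)
    ∀ w : M X,
      map lam3 (map P3 (delta (map h3 w))) =
        map lam2 (map P2 (delta (map h2
          (map lam1 (map P1 (delta (map h1 w))))))) := by
  intro ctx1 P3 h3 lam3 w
  have wreath_local : ∀ m : M X, lam3 (P3 (map h3 m)) =
      lam2 (P2 (map (fun n => h2 (lam1 (P1 (map h1 n)))) (delta m))) := by
    intro m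
    show lam2 (P2 (map _ (delta (map h3 m)))) = _
    rw [map_delta_map mapComp deltaNat]
    congr 3
    funext n
    rw [← epsNat _ _ h3 n, mapComp]
    exact congrArg (fun l => h2 (lam1 (P1 l))) (put_map_eps epsNat getPut h1 n)
  calc map lam3 (map P3 (delta (map h3 w)))
      = map (fun m => lam3 (P3 (map h3 m))) (delta w) := by
        rw [mapComp, map_delta_map mapComp deltaNat]
        rfl
    _ = map (fun m => lam2 (P2 (map (fun n => h2 (lam1 (P1 (map h1 n)))) (delta m)))) (delta w) :=
        congrArg (map · (delta w)) (funext wreath_local)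
    _ = map lam2 (map P2 (delta (map h2 (map lam1 (map P1 (delta (map h1 w))))))) := by
        rw [mapComp, mapComp, mapComp, map_delta_map mapComp deltaNat h1,
          map_delta_map_delta mapComp deltaNat deltaAssoc]
        rfl

/-- Under the coherence axioms, the `M`-transduction given by the generalized wreath
product `(S₃, h₃, λ₃)` computes the composition of the `M`-transductions
`(S₁, h₁, λ₁) : M Σ → M Γ` and `(S₂, h₂, λ₂) : M Γ → M Δ`. -/
theorem wreath_product_composes
    (M : Type → Type)
    (map : {A B : Type} → (A → B) → M A → M B)
    (eta : {A : Type} → A → M A)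
    (mu : {A : Type} → M (M A) → M A)
    (eps : {A : Type} → M A → A)
    (delta : {A : Type} → M A → M (M A))
    (put : {A : Type} → M A × A → M A)
    -- functor axioms
    (mapId : ∀ (A : Type) (x : M A), map (id : A → A) x = x)
    (mapComp : ∀ (A B C : Type) (f : B → C) (g : A → B) (x : M A),
      map f (map g x) = map (f ∘ g) x)
    -- naturality
    (muNat : ∀ (A B : Type) (f : A → B) (x : M (M A)), mu (map (map f) x) = map f (mu x))
    (etaNat : ∀ (A B : Type) (f : A → B) (x : A), eta (f x) = map f (eta x))
    (epsNat : ∀ (A B : Type) (f : A → B) (x : M A), f (eps x) = eps (map f x))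
    (deltaNat : ∀ (A B : Type) (f : A → B) (x : M A),
      delta (map f x) = map (map f) (delta x))
    (putNat : ∀ (A B : Type) (f : A → B) (l : M A) (a : A),
      map f (put (l, a)) = put (map f l, f a))
    -- monad axioms
    (muAssoc : ∀ (A : Type) (x : M (M (M A))), mu (mu x) = mu (map mu x))
    (muEta : ∀ (A : Type) (x : M A), mu (eta x) = x)
    (muMapEta : ∀ (A : Type) (x : M A), mu (map eta x) = x)
    -- comonad axioms
    (deltaAssoc : ∀ (A : Type) (x : M A), delta (delta x) = map delta (delta x))
    (epsDelta : ∀ (A : Type) (x : M A), eps (delta x) = x)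
    (mapEpsDelta : ∀ (A : Type) (x : M A), map eps (delta x) = x)
    -- coherence axioms
    (flattenExtract : ∀ (A : Type) (x : M (M A)), eps (mu x) = eps (eps x))
    (singletonExpand : ∀ (A : Type) (x : A), delta (eta x) = map eta (eta x))
    (singletonExtract : ∀ (A : Type) (x : A), eps (eta x) = x)
    (getPut : ∀ (A : Type) (l : M A), put (l, eps l) = l)
    (putGet : ∀ (A : Type) (l : M A) (a : A), eps (put (l, a)) = a)
    (putPut : ∀ (A : Type) (l : M A) (a b : A), put (put (l, a), b) = put (l, b))
    (putAssoc : ∀ (A : Type) (x : M (M A)) (y : M A) (z : A),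
      put (mu (put (x, y)), z) = mu (put (x, put (y, z))))
    (singletonPut : ∀ (A : Type) (x y : A), put (eta x, y) = eta y)
    (flattenExpand : ∀ (A : Type) (x : M (M A)),
      delta (mu x) =
        mu (map (fun w : M (M A) =>
          map mu (map put (map (fun p : M A => (w, p)) (delta (eps w)))))
          (delta x)))
    (S1 S2 : Type) (P1 : M S1 → S1) (P2 : M S2 → S2)
    (alg1Unit : ∀ x : S1, P1 (eta x) = x)
    (alg1Assoc : ∀ l : M (M S1), P1 (map P1 l) = P1 (mu l))
    (alg2Unit : ∀ x : S2, P2 (eta x) = x)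
    (alg2Assoc : ∀ l : M (M S2), P2 (map P2 l) = P2 (mu l))
    (X Y Z : Type)
    (h1 : X → S1) (lam1 : S1 → Y) (h2 : Y → S2) (lam2 : S2 → Z) :
    let ctx1 : M S1 → S1 → S1 := fun l x => P1 (put (l, x))
    let P3 : M (S1 × ((S1 → S1) → S2)) → S1 × ((S1 → S1) → S2) := fun l =>
      (P1 (map Prod.fst l),
       fun c => P2 (map
         (fun m : M (S1 × ((S1 → S1) → S2)) =>
           (eps m).2 (c ∘ ctx1 (map Prod.fst m)))
         (delta l)))
    let h3 : X → S1 × ((S1 → S1) → S2) := fun a =>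
      (h1 a, fun c => h2 (lam1 (c (h1 a))))
    let lam3 : S1 × ((S1 → S1) → S2) → Z := fun s => lam2 (s.2 id)
    ∀ w : M X,
      map lam3 (map P3 (delta (map h3 w))) =
        map lam2 (map P2 (delta (map h2
          (map lam1 (map P1 (delta (map h1 w))))))) :=
  wreath_product_composes_general M map eps delta put mapComp epsNat deltaNat deltaAssoc getPut S1
    S2 P1 P2 X Y Z h1 lam1 h2 lam2
end
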